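/- For measurable R : [0,t_f] → [0,∞) with ∫₀^{t_f} R dt = c and measurable s : [0,t_f] → [s_min, s_max] with 0 < s_min ≤ s_max, the total communication energy ∫₀^{t_f} ((2^{R(t)} − 1)/K) s(t) dt is at least (s_min/K) · t_f · (2^{c/t_f} − 1). -/

import Mathlib

open MeasureTheory Real

/-!
Since `2 ^ R - 1 ≥ 0` and `s ≥ s_min`, the integrand dominates `(s_min / K) (2 ^ R - 1)`.
Bounding `2 ^ R` from below by the tangent line of `x ↦ 2 ^ x` at the mean rate `c / t_f`
and integrating (the proof of Jensen's inequality) gives the bound, because the affine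
minorant integrates to exactly `t_f (2 ^ (c / t_f) - 1)`.
-/

theorem Real.rpow_tangent_le {b : ℝ} (hb : 0 < b) (m x : ℝ) :
    b ^ m + b ^ m * log b * (x - m) ≤ b ^ x :=
  calc b ^ m + b ^ m * log b * (x - m) = b ^ m * (log b * (x - m) + 1) := by ring
    _ ≤ b ^ m * exp (log b * (x - m)) := by gcongr; exact add_one_le_exp _
    _ = b ^ x := by rw [← rpow_def_of_pos hb, ← rpow_add hb, add_sub_cancel]

theorem intervalIntegral.affine_integral_le_of_affine_le {a b u v : ℝ} {f g : ℝ → ℝ}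
    (huv : u ≤ v) (hf : IntervalIntegrable f volume u v) (hg : IntervalIntegrable g volume u v)
    (h : ∀ t ∈ Set.Icc u v, a + b * f t ≤ g t) :
    a * (v - u) + b * ∫ t in u..v, f t ≤ ∫ t in u..v, g t := by
  have hlin : IntervalIntegrable (fun t => a + b * f t) volume u v :=
    intervalIntegrable_const.add (hf.const_mul b)
  calc a * (v - u) + b * ∫ t in u..v, f t = ∫ t in u..v, (a + b * f t) := by
        rw [integral_add intervalIntegrable_const (hf.const_mul b), integral_const,
          integral_const_mul, smul_eq_mul, mul_comm]
    _ ≤ ∫ t in u..v, g t := integral_mono_on huv hlin hg h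

theorem energy_integrand_ge_tangent {K σ s r : ℝ} (hK : 0 < K) (hσ : 0 ≤ σ) (hσs : σ ≤ s)
    (hr : 0 ≤ r) (m : ℝ) :
    σ / K * ((2 : ℝ) ^ m + (2 : ℝ) ^ m * log 2 * (r - m) - 1) ≤ ((2 : ℝ) ^ r - 1) / K * s := by
  have hrate : 0 ≤ ((2 : ℝ) ^ r - 1) / K := by
    have : (1 : ℝ) ≤ 2 ^ r := one_le_rpow (by norm_num) hr
    exact div_nonneg (by linarith) hK.le
  calc σ / K * ((2 : ℝ) ^ m + (2 : ℝ) ^ m * log 2 * (r - m) - 1)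
      ≤ σ / K * ((2 : ℝ) ^ r - 1) := by gcongr; exact rpow_tangent_le two_pos m r
    _ = ((2 : ℝ) ^ r - 1) / K * σ := by ring
    _ ≤ ((2 : ℝ) ^ r - 1) / K * s := by gcongr

theorem communication_energy_lower_bound_general (t_f K c s_min s_max : ℝ)
    (ht : 0 < t_f) (hK : 0 < K) (hsmin : 0 < s_min)
    (R s : ℝ → ℝ)
    (hRpos : ∀ t ∈ Set.Icc 0 t_f, 0 ≤ R t)
    (hsb : ∀ t ∈ Set.Icc 0 t_f, s t ∈ Set.Icc s_min s_max)
    (hRint : IntervalIntegrable R volume 0 t_f)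
    (hIc : (∫ t in (0:ℝ)..t_f, R t) = c)
    (hEint : IntervalIntegrable (fun t => ((2 : ℝ) ^ (R t) - 1) / K * s t) volume 0 t_f) :
    s_min / K * t_f * ((2 : ℝ) ^ (c / t_f) - 1)
      ≤ ∫ t in (0:ℝ)..t_f, ((2 : ℝ) ^ (R t) - 1) / K * s t := by
  set m := c / t_f
  have hJensen := intervalIntegral.affine_integral_le_of_affine_le ht.le hRint hEint
    (a := s_min / K * ((2 : ℝ) ^ m - (2 : ℝ) ^ m * log 2 * m - 1))
    (b := s_min / K * ((2 : ℝ) ^ m * log 2)) fun t htI => by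
      have := energy_integrand_ge_tangent hK hsmin.le (hsb t htI).1 (hRpos t htI) m
      linarith
  convert hJensen using 1
  rw [hIc, ← div_mul_cancel₀ c ht.ne']
  ring

/-- Lower bound on total communication energy: for `R ≥ 0` with `∫₀^{t_f} R = c` and
channel quality `s(t) ∈ [s_min, s_max]`, `∫₀^{t_f} ((2^{R(t)} − 1)/K)s(t) dt ≥
(s_min/K)·t_f·(2^{c/t_f} − 1)`. -/
theorem communication_energy_lower_bound (t_f K c s_min s_max : ℝ)
    (ht : 0 < t_f) (hK : 0 < K) (hc : 0 ≤ c) (hsmin : 0 < s_min) (hss : s_min ≤ s_max)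
    (R s : ℝ → ℝ) (hRmeas : Measurable R) (hsmeas : Measurable s)
    (hRpos : ∀ t ∈ Set.Icc 0 t_f, 0 ≤ R t)
    (hsb : ∀ t ∈ Set.Icc 0 t_f, s t ∈ Set.Icc s_min s_max)
    (hRint : IntervalIntegrable R volume 0 t_f)
    (hIc : (∫ t in (0:ℝ)..t_f, R t) = c)
    (hEint : IntervalIntegrable (fun t => ((2 : ℝ) ^ (R t) - 1) / K * s t) volume 0 t_f) :
    s_min / K * t_f * ((2 : ℝ) ^ (c / t_f) - 1)
      ≤ ∫ t in (0:ℝ)..t_f, ((2 : ℝ) ^ (R t) - 1) / K * s t :=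
  communication_energy_lower_bound_general t_f K c s_min s_max ht hK hsmin R s hRpos hsb hRint hIc
    hEint
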